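/- arXiv:1504.06842 — 2 statements merged into one kernel-verified Lean document; each statement's English description precedes it below -/
import Mathlib

section
/- In the vertical visibility decomposition of the free space, under the general-position assumption that no two vertical obstacle edges are collinear, each vertical side of a cell contains at most two diagonals. -/
/-- In the vertical visibility decomposition, each vertical side of
a cell contains at most two diagonals.  Abstractly: every diagonal is the
(upward or downward) extension of a vertical obstacle edge with the same
x-coordinate, distinct diagonals come from distinct (edge, direction) pairs,
and by the general-position assumption no two vertical obstacle edges are
collinear (distinct edges have distinct x-coordinates).  Hence at most two
diagonals lie on any fixed vertical line — in particular on any vertical cell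
side. -/
theorem stmt4 {Diag Edge : Type*} (xD : Diag → ℝ) (xE : Edge → ℝ)
    (gen : Diag → Edge × Bool) (hinj : Function.Injective gen)
    (hx : ∀ g : Diag, xD g = xE (gen g).1)
    (hGP : ∀ e e' : Edge, xE e = xE e' → e = e') (x : ℝ) :
    ∀ g1 g2 g3 : Diag, xD g1 = x → xD g2 = x → xD g3 = x →
      g1 = g2 ∨ g1 = g3 ∨ g2 = g3 := by
  intro g1 g2 g3 h1 h2 h3
  have e12 : (gen g1).1 = (gen g2).1 := hGP _ _ (by rw [← hx, ← hx, h1, h2])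
  have e13 : (gen g1).1 = (gen g3).1 := hGP _ _ (by rw [← hx, ← hx, h1, h3])
  have e23 : (gen g2).1 = (gen g3).1 := hGP _ _ (by rw [← hx, ← hx, h2, h3])
  rcases Bool.eq_or_eq_not (gen g1).2 (gen g2).2 with hb | hb
  · exact Or.inl (hinj (Prod.ext e12 hb))
  rcases Bool.eq_or_eq_not (gen g1).2 (gen g3).2 with hb' | hb'
  · exact Or.inr (Or.inl (hinj (Prod.ext e13 hb')))
  · refine Or.inr (Or.inr (hinj (Prod.ext e23 ?_)))
    rw [hb] at hb'
    exact Bool.not_inj hb'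
end

section
/- Splitting amortization for the corridor-processing algorithm: if every split operation applied to a beam set B produces two beam sets each of size at most |B| − 1, and all beams originate from an initial set of size h1 while the final set has size h2, then the total number of split operations performed is O(h1 − h2 + 1). -/
/-- Splitting amortization for the corridor-processing
algorithm.  Track the sizes of all live beam sets as a multiset of naturals:
initially a single set of `h1` beams; each split replaces a set `B` with
`|B| ≥ 2` by two sets `B'`, `B''` with `|B'| + |B''| ≤ |B| − 1` (each of size
at most `|B| − 1`, with at least one beam of `B` discarded); at the end some
surviving lineage has `h2` beams.  Then the number `k` of split operations is
at most `h1 − h2 + 1` (truncated subtraction), i.e. `O(h1 − h2 + 1)`. -/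
theorem stmt18 (h1 h2 k : ℕ) (S : Fin (k + 1) → Multiset ℕ)
    (h0 : S 0 = {h1})
    (hstep : ∀ i : Fin k, ∃ a a' a'' : ℕ,
        a ∈ S i.castSucc ∧ 2 ≤ a ∧ a' + a'' + 1 ≤ a ∧
        S i.succ = a' ::ₘ a'' ::ₘ (S i.castSucc).erase a)
    (hfin : h2 ∈ S (Fin.last k)) :
    k ≤ h1 - h2 + 1 := by
  have key : ∀ n : ℕ, ∀ hn : n ≤ k, (S ⟨n, Nat.lt_succ_of_le hn⟩).sum + n ≤ h1 := by
    intro n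
    induction n with
    | zero => intro hn; simp [show (⟨0, Nat.lt_succ_of_le hn⟩ : Fin (k+1)) = 0 from rfl, h0]
    | succ m ih =>
      intro hn
      have hm : m ≤ k := Nat.le_of_succ_le hn
      have hmk : m < k := hn
      obtain ⟨a, a', a'', hmem, h2a, hsum, heq⟩ := hstep ⟨m, hmk⟩
      have hcast : (⟨m, hmk⟩ : Fin k).castSucc = ⟨m, Nat.lt_succ_of_le hm⟩ := rfl
      have hsucc : (⟨m, hmk⟩ : Fin k).succ = ⟨m + 1, Nat.lt_succ_of_le hn⟩ := rfl
      rw [hcast] at hmem heq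
      rw [hsucc] at heq
      have herase : ((S ⟨m, Nat.lt_succ_of_le hm⟩).erase a).sum + a
          = (S ⟨m, Nat.lt_succ_of_le hm⟩).sum := by
        conv_rhs => rw [← Multiset.cons_erase hmem]
        simp [add_comm]
      have := ih hm
      calc (S ⟨m + 1, Nat.lt_succ_of_le hn⟩).sum + (m + 1)
          = a' + a'' + 1 + ((S ⟨m, Nat.lt_succ_of_le hm⟩).erase a).sum + m := by
            rw [heq]; simp [Multiset.sum_cons]; ring
        _ ≤ a + ((S ⟨m, Nat.lt_succ_of_le hm⟩).erase a).sum + m := by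
            omega
        _ = (S ⟨m, Nat.lt_succ_of_le hm⟩).sum + m := by omega
        _ ≤ h1 := this
  have hk := key k le_rfl
  have hlast : (Fin.last k) = ⟨k, Nat.lt_succ_of_le le_rfl⟩ := rfl
  rw [hlast] at hfin
  have := Multiset.single_le_sum (fun x _ => Nat.zero_le x) _ hfin
  omega
end
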